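/- arXiv:0907.0907 — 2 statements merged into one kernel-verified Lean document; each statement's English description precedes it below -/
import Mathlib

section
/- For every finite set P ⊆ U, the tiles of the compressed quadtree map QT(P) partition the unit square: the tiles of QT(P) are pairwise disjoint and their union equals U. -/
/-- The unit square `U = [0,1) × [0,1)`. -/
def unitSq : Set (ℝ × ℝ) := Set.Ico (0 : ℝ) 1 ×ˢ Set.Ico (0 : ℝ) 1

/-- The square `[i/2^k, (i+1)/2^k) × [j/2^k, (j+1)/2^k)`. -/
def canSq (k : ℕ) (i j : ℤ) : Set (ℝ × ℝ) :=
  Set.Ico ((i : ℝ) / 2 ^ k) (((i : ℝ) + 1) / 2 ^ k) ×ˢ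
    Set.Ico ((j : ℝ) / 2 ^ k) (((j : ℝ) + 1) / 2 ^ k)

/-- `σ` is a canonical square of side length `2⁻ᵏ`: it has the form
`[i/2^k, (i+1)/2^k) × [j/2^k, (j+1)/2^k)` with `0 ≤ i, j < 2^k`
(so it is contained in the unit square). -/
def IsCanSqSide (k : ℕ) (σ : Set (ℝ × ℝ)) : Prop :=
  ∃ i j : ℤ, 0 ≤ i ∧ i < 2 ^ k ∧ 0 ≤ j ∧ j < 2 ^ k ∧ σ = canSq k i j

/-- `σ` is a canonical square. -/
def IsCanSq (σ : Set (ℝ × ℝ)) : Prop := ∃ k : ℕ, IsCanSqSide k σ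

/-- `q` is one of the four quadrants of the canonical square `σ`: if `σ` has side
length `2⁻ᵏ`, the quadrants are the canonical squares of side length `2⁻⁽ᵏ⁺¹⁾`
contained in `σ`. -/
def IsQuadrantOf (q σ : Set (ℝ × ℝ)) : Prop :=
  ∃ k : ℕ, IsCanSqSide k σ ∧ IsCanSqSide (k + 1) q ∧ q ⊆ σ

/-- `σ` is the smallest canonical square containing `S`: it is a canonical square,
it contains `S`, and it is contained in every canonical square containing `S`. -/
def IsSmallestCanSq (S σ : Set (ℝ × ℝ)) : Prop :=
  IsCanSq σ ∧ S ⊆ σ ∧ ∀ τ : Set (ℝ × ℝ), IsCanSq τ → S ⊆ τ → σ ⊆ τ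

open scoped Classical

/-- `smallestCanSq S`: the smallest canonical square containing `S` (junk value `∅` if none exists). -/
noncomputable def smallestCanSq (S : Set (ℝ × ℝ)) : Set (ℝ × ℝ) :=
  if h : ∃ σ : Set (ℝ × ℝ), IsSmallestCanSq S σ then h.choose else ∅

/-- A canonical square `σ` is critical for `P` if at least two of its four
quadrants contain a point of `P`. -/
def Critical (P σ : Set (ℝ × ℝ)) : Prop :=
  IsCanSq σ ∧ ∃ q₁ q₂ : Set (ℝ × ℝ), IsQuadrantOf q₁ σ ∧ IsQuadrantOf q₂ σ ∧
    q₁ ≠ q₂ ∧ (P ∩ q₁).Nonempty ∧ (P ∩ q₂).Nonempty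

/-- The tiles of the compressed quadtree map `QT(P)`: (i) `U` itself if `|P| ≤ 1`;
(ii) the annulus `U \ sq(P)` if `|P| ≥ 2` and `sq(P) ≠ U`; (iii) for every
canonical square `σ` critical for `P` and every quadrant `q` of `σ`: the square
`q` if `|P ∩ q| ≤ 1`, and the annulus `q \ sq(P ∩ q)` if `|P ∩ q| ≥ 2` and
`sq(P ∩ q) ≠ q`. -/
noncomputable def QT (P : Set (ℝ × ℝ)) : Set (Set (ℝ × ℝ)) :=
  {f | (P.ncard ≤ 1 ∧ f = unitSq)
    ∨ (2 ≤ P.ncard ∧ smallestCanSq P ≠ unitSq ∧ f = unitSq \ smallestCanSq P)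
    ∨ (∃ σ q : Set (ℝ × ℝ), Critical P σ ∧ IsQuadrantOf q σ ∧
        (((P ∩ q).ncard ≤ 1 ∧ f = q)
          ∨ (2 ≤ (P ∩ q).ncard ∧ smallestCanSq (P ∩ q) ≠ q ∧ f = q \ smallestCanSq (P ∩ q))))}

/-!
Canonical squares are the cells of the dyadic grids, so two of them are either nested or
disjoint, and a critical square `σ` is exactly `sq(P ∩ σ)`. Every tile is cut out of a
*tile square* `q` (the unit square, or a quadrant of a critical square) as `q` or
`q \ sq(P ∩ q)`. If one tile square `q'` lies strictly inside another one `q`, then the critical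
parent of `q'` lies inside `sq(P ∩ q)`, so `q'` misses the tile of `q`: tiles meeting in a point
come from the same square, which gives disjointness. For coverage, descend from `U`: a point of
`q` outside the tile of `q` lies in `sq(P ∩ q)`, which is critical, hence in one of its
quadrants, and that quadrant contains fewer points of `P` than `q`.
-/

lemma mem_canSq {x : ℝ × ℝ} {k : ℕ} {i j : ℤ} :
    x ∈ canSq k i j ↔ ⌊x.1 * 2 ^ k⌋ = i ∧ ⌊x.2 * 2 ^ k⌋ = j := by
  have hk : (0 : ℝ) < 2 ^ k := by positivity
  simp only [canSq, Set.mem_prod, Set.mem_Ico, Int.floor_eq_iff, div_le_iff₀ hk, lt_div_iff₀ hk]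

lemma norm_sub_lt_of_mem_canSq {y z : ℝ × ℝ} {k : ℕ} {i j : ℤ} (hy : y ∈ canSq k i j)
    (hz : z ∈ canSq k i j) : ‖y - z‖ < 2⁻¹ ^ k := by
  have hside : ∀ a : ℤ, ((a : ℝ) + 1) / 2 ^ k = a / 2 ^ k + 2⁻¹ ^ k := fun a => by
    rw [add_div, inv_pow, one_div]
  simp only [canSq, Set.mem_prod, Set.mem_Ico, hside] at hy hz
  rw [Prod.norm_def, max_lt_iff, Prod.fst_sub, Prod.snd_sub, Real.norm_eq_abs, Real.norm_eq_abs,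
    abs_sub_lt_iff, abs_sub_lt_iff]
  refine ⟨⟨?_, ?_⟩, ?_, ?_⟩ <;> linarith

lemma isCanSqSide_zero_unitSq : IsCanSqSide 0 unitSq :=
  ⟨0, 0, le_rfl, by norm_num, le_rfl, by norm_num, by simp [unitSq, canSq]⟩

lemma IsCanSqSide.subset_unitSq {k : ℕ} {σ : Set (ℝ × ℝ)} (h : IsCanSqSide k σ) :
    σ ⊆ unitSq := by
  obtain ⟨i, j, hi0, hi, hj0, hj, rfl⟩ := h
  intro y hy
  obtain ⟨rfl, rfl⟩ := mem_canSq.mp hy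
  rw [Int.floor_nonneg] at hi0 hj0
  rw [Int.floor_lt] at hi hj
  push_cast at hi hj
  have hk : (0 : ℝ) < 2 ^ k := by positivity
  refine ⟨⟨?_, ?_⟩, ?_, ?_⟩ <;> nlinarith

lemma IsCanSq.subset_unitSq {σ : Set (ℝ × ℝ)} (h : IsCanSq σ) : σ ⊆ unitSq :=
  h.choose_spec.subset_unitSq

lemma IsCanSqSide.nonempty {k : ℕ} {σ : Set (ℝ × ℝ)} (h : IsCanSqSide k σ) : σ.Nonempty := by
  obtain ⟨i, j, -, -, -, -, rfl⟩ := h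
  exact ⟨(i / 2 ^ k, j / 2 ^ k), Set.left_mem_Ico.mpr (by gcongr; linarith),
    Set.left_mem_Ico.mpr (by gcongr; linarith)⟩

lemma IsCanSqSide.unique {k k' : ℕ} {σ : Set (ℝ × ℝ)} (h : IsCanSqSide k σ)
    (h' : IsCanSqSide k' σ) : k = k' := by
  have hne := h.nonempty
  obtain ⟨i, j, -, -, -, -, rfl⟩ := h
  obtain ⟨i', j', -, -, -, -, he⟩ := h'
  obtain ⟨hI, -⟩ := (Set.prod_eq_prod_iff_of_nonempty hne).mp he
  obtain ⟨hleft, hright⟩ := (Set.Ico_eq_Ico_iff (.inl (by gcongr; linarith))).mp hI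
  rw [add_div, add_div, hleft, add_right_inj, one_div, one_div, inv_inj] at hright
  exact Nat.pow_right_injective le_rfl (by exact_mod_cast hright)

def cell (k : ℕ) (x : ℝ × ℝ) : Set (ℝ × ℝ) := canSq k ⌊x.1 * 2 ^ k⌋ ⌊x.2 * 2 ^ k⌋

lemma mem_cell {k : ℕ} {x y : ℝ × ℝ} :
    y ∈ cell k x ↔ ⌊y.1 * 2 ^ k⌋ = ⌊x.1 * 2 ^ k⌋ ∧ ⌊y.2 * 2 ^ k⌋ = ⌊x.2 * 2 ^ k⌋ :=
  mem_canSq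

lemma mem_cell_self (k : ℕ) (x : ℝ × ℝ) : x ∈ cell k x := mem_cell.mpr ⟨rfl, rfl⟩

lemma floor_mul_two_pow_eq_div (r : ℝ) (k d : ℕ) :
    ⌊r * 2 ^ k⌋ = ⌊r * 2 ^ (k + d)⌋ / 2 ^ d := by
  rw [pow_add, ← mul_assoc]
  exact_mod_cast (Int.mul_natCast_floor_div_cancel (pow_ne_zero d two_ne_zero) (r * 2 ^ k)).symm

lemma cell_subset_cell {k k' : ℕ} (h : k ≤ k') (x : ℝ × ℝ) : cell k' x ⊆ cell k x := by
  obtain ⟨d, rfl⟩ := Nat.exists_eq_add_of_le h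
  intro y hy
  rw [mem_cell] at hy ⊢
  simp only [floor_mul_two_pow_eq_div _ k d, hy, and_self]

lemma isCanSqSide_cell (k : ℕ) {x : ℝ × ℝ} (hx : x ∈ unitSq) : IsCanSqSide k (cell k x) := by
  obtain ⟨⟨h1, h1'⟩, h2, h2'⟩ := hx
  have hk : (0 : ℝ) < 2 ^ k := by positivity
  refine ⟨_, _, Int.floor_nonneg.mpr (by positivity), ?_, Int.floor_nonneg.mpr (by positivity),
    ?_, rfl⟩ <;> rw [Int.floor_lt] <;> push_cast <;> nlinarith

lemma IsCanSqSide.eq_cell {k : ℕ} {σ : Set (ℝ × ℝ)} {x : ℝ × ℝ} (h : IsCanSqSide k σ)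
    (hx : x ∈ σ) : σ = cell k x := by
  obtain ⟨i, j, -, -, -, -, rfl⟩ := h
  obtain ⟨rfl, rfl⟩ := mem_canSq.mp hx
  rfl

lemma IsCanSqSide.subset_of_le {k k' : ℕ} {σ τ : Set (ℝ × ℝ)} {x : ℝ × ℝ}
    (hσ : IsCanSqSide k σ) (hτ : IsCanSqSide k' τ) (hk : k ≤ k') (hxσ : x ∈ σ) (hxτ : x ∈ τ) :
    τ ⊆ σ := by
  rw [hσ.eq_cell hxσ, hτ.eq_cell hxτ]
  exact cell_subset_cell hk x

lemma IsCanSq.subset_or_subset {σ τ : Set (ℝ × ℝ)} {x : ℝ × ℝ} (hσ : IsCanSq σ)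
    (hτ : IsCanSq τ) (hxσ : x ∈ σ) (hxτ : x ∈ τ) : σ ⊆ τ ∨ τ ⊆ σ := by
  obtain ⟨k, hσ⟩ := hσ
  obtain ⟨k', hτ⟩ := hτ
  rcases le_total k k' with hk | hk
  · exact .inr (hσ.subset_of_le hτ hk hxσ hxτ)
  · exact .inl (hτ.subset_of_le hσ hk hxτ hxσ)

lemma exists_isSmallestCanSq {S : Set (ℝ × ℝ)} (hS : S.Nontrivial) (hSU : S ⊆ unitSq) :
    ∃ σ, IsSmallestCanSq S σ := by
  obtain ⟨p, hp, q, hq, hpq⟩ := hS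
  obtain ⟨n, hn⟩ := exists_pow_lt_of_lt_one (norm_sub_pos_iff.mpr hpq) (by norm_num : (2 : ℝ)⁻¹ < 1)
  have hbound : ∀ k, S ⊆ cell k p → k < n := fun k hk =>
    (pow_lt_pow_iff_right_of_lt_one₀ (by norm_num) (by norm_num)).mp
      (hn.trans (norm_sub_lt_of_mem_canSq (hk hp) (hk hq)))
  have h0 : S ⊆ cell 0 p := by rwa [← isCanSqSide_zero_unitSq.eq_cell (hSU hp)]
  refine ⟨cell (Nat.findGreatest (fun k => S ⊆ cell k p) n) p,
    ⟨_, isCanSqSide_cell _ (hSU hp)⟩, Nat.findGreatest_spec (P := fun k => S ⊆ cell k p) (Nat.zero_le n) h0, ?_⟩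
  rintro τ ⟨k, hτ⟩ hSτ
  obtain rfl := hτ.eq_cell (hSτ hp)
  exact cell_subset_cell (Nat.le_findGreatest (hbound k hSτ).le hSτ) p

lemma isSmallestCanSq_smallestCanSq {S : Set (ℝ × ℝ)} (hS : S.Nontrivial) (hSU : S ⊆ unitSq) :
    IsSmallestCanSq S (smallestCanSq S) := by
  have h := exists_isSmallestCanSq hS hSU
  rw [smallestCanSq, dif_pos h]
  exact h.choose_spec

section Quadrant

variable {q σ τ : Set (ℝ × ℝ)}

lemma IsQuadrantOf.subset (h : IsQuadrantOf q σ) : q ⊆ σ := h.choose_spec.2.2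

lemma IsQuadrantOf.isCanSq (h : IsQuadrantOf q σ) : IsCanSq q := ⟨_, h.choose_spec.2.1⟩

lemma IsQuadrantOf.ne (h : IsQuadrantOf q σ) : q ≠ σ := by
  rintro rfl
  obtain ⟨k, hσ, hq, -⟩ := h
  exact absurd (hσ.unique hq) k.succ_ne_self.symm

lemma IsQuadrantOf.eq_of_mem {q' : Set (ℝ × ℝ)} {x : ℝ × ℝ} (h : IsQuadrantOf q σ)
    (h' : IsQuadrantOf q' σ) (hx : x ∈ q) (hx' : x ∈ q') : q = q' := by
  obtain ⟨k, hσ, hq, -⟩ := h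
  obtain ⟨k', hσ', hq', -⟩ := h'
  obtain rfl := hσ.unique hσ'
  rw [hq.eq_cell hx, hq'.eq_cell hx']

lemma IsQuadrantOf.subset_of_ssubset (h : IsQuadrantOf q σ) (hτ : IsCanSq τ) (hqτ : q ⊂ τ) :
    σ ⊆ τ := by
  obtain ⟨k, hσ, hq, hqσ⟩ := h
  obtain ⟨m, hτ⟩ := hτ
  obtain ⟨x, hx⟩ := hq.nonempty
  have hm : m ≤ k := by
    by_contra! hkm
    exact hqτ.2 (hq.subset_of_le hτ hkm hx (hqτ.1 hx))
  exact hτ.subset_of_le hσ hm (hqτ.1 hx) (hqσ hx)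

lemma IsCanSq.exists_quadrant_mem {x : ℝ × ℝ} (hσ : IsCanSq σ) (hx : x ∈ σ) :
    ∃ q, IsQuadrantOf q σ ∧ x ∈ q := by
  obtain ⟨k, hσ⟩ := hσ
  refine ⟨cell (k + 1) x, ⟨k, hσ, isCanSqSide_cell _ (hσ.subset_unitSq hx), ?_⟩,
    mem_cell_self _ x⟩
  rw [hσ.eq_cell hx]
  exact cell_subset_cell k.le_succ x

end Quadrant

section Critical

variable {P σ τ q : Set (ℝ × ℝ)}

lemma critical_iff : Critical P σ ↔ (P ∩ σ).Nontrivial ∧ IsSmallestCanSq (P ∩ σ) σ := by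
  constructor
  · rintro ⟨hσ, q₁, q₂, hq₁, hq₂, hne, ⟨p₁, hp₁, hpq₁⟩, ⟨p₂, hp₂, hpq₂⟩⟩
    have hp₂q₁ : p₂ ∉ q₁ := fun h => hne (hq₁.eq_of_mem hq₂ h hpq₂)
    refine ⟨⟨p₁, ⟨hp₁, hq₁.subset hpq₁⟩, p₂, ⟨hp₂, hq₂.subset hpq₂⟩, fun h => hp₂q₁ (h ▸ hpq₁)⟩,
      hσ, Set.inter_subset_right, fun τ hτ hPτ => ?_⟩
    have hτq₁ : ¬ τ ⊆ q₁ := fun h => hp₂q₁ (h (hPτ ⟨hp₂, hq₂.subset hpq₂⟩))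
    have hq₁τ : q₁ ⊆ τ :=
      (hq₁.isCanSq.subset_or_subset hτ hpq₁ (hPτ ⟨hp₁, hq₁.subset hpq₁⟩)).resolve_right hτq₁
    exact hq₁.subset_of_ssubset hτ ⟨hq₁τ, hτq₁⟩
  · rintro ⟨⟨p, hp, -⟩, hσ, -, hmin⟩
    obtain ⟨q₁, hq₁, hpq₁⟩ := hσ.exists_quadrant_mem hp.2
    obtain ⟨p', hp', hp'q₁⟩ := Set.not_subset.mp fun h =>
      hq₁.ne (hq₁.subset.antisymm (hmin q₁ hq₁.isCanSq h))
    obtain ⟨q₂, hq₂, hp'q₂⟩ := hσ.exists_quadrant_mem hp'.2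
    exact ⟨hσ, q₁, q₂, hq₁, hq₂, fun h => hp'q₁ (h ▸ hp'q₂), ⟨p, hp.1, hpq₁⟩, ⟨p', hp'.1, hp'q₂⟩⟩

lemma Critical.subset_smallestCanSq (hσ : Critical P σ) (hτ : IsCanSq τ) (hστ : σ ⊆ τ) :
    (P ∩ τ).Nontrivial ∧ σ ⊆ smallestCanSq (P ∩ τ) := by
  obtain ⟨hne, -, -, hmin⟩ := critical_iff.mp hσ
  have hsub : P ∩ σ ⊆ P ∩ τ := Set.inter_subset_inter_right P hστ
  have hsm := isSmallestCanSq_smallestCanSq (hne.mono hsub)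
    (Set.inter_subset_right.trans hτ.subset_unitSq)
  exact ⟨hne.mono hsub, hmin _ hsm.1 (hsub.trans hsm.2.1)⟩

lemma Critical.ncard_inter_lt (hP : P.Finite) (hσ : Critical P σ) (hq : IsQuadrantOf q σ) :
    (P ∩ q).ncard < (P ∩ σ).ncard := by
  obtain ⟨-, q₁, q₂, hq₁, hq₂, hne, ⟨p₁, hp₁, hpq₁⟩, ⟨p₂, hp₂, hpq₂⟩⟩ := hσ
  obtain ⟨p, hp, hpq⟩ : ∃ p ∈ P ∩ σ, p ∉ q := by
    by_contra! h
    exact hne ((hq.eq_of_mem hq₁ (h p₁ ⟨hp₁, hq₁.subset hpq₁⟩) hpq₁).symm.trans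
      (hq.eq_of_mem hq₂ (h p₂ ⟨hp₂, hq₂.subset hpq₂⟩) hpq₂))
  exact Set.ncard_lt_ncard ((Set.ssubset_iff_of_subset (Set.inter_subset_inter_right P hq.subset)).mpr
    ⟨p, hp, fun h => hpq h.2⟩) (hP.inter_of_left σ)

lemma IsSmallestCanSq.inter_eq (h : IsSmallestCanSq (P ∩ q) σ) (hq : IsCanSq q) :
    P ∩ σ = P ∩ q :=
  subset_antisymm (Set.inter_subset_inter_right P (h.2.2 q hq Set.inter_subset_right))
    fun _ hz => ⟨hz.1, h.2.1 hz⟩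

lemma IsSmallestCanSq.critical (h : IsSmallestCanSq (P ∩ q) σ) (hq : IsCanSq q)
    (hne : (P ∩ q).Nontrivial) : Critical P σ :=
  critical_iff.mpr (by rw [h.inter_eq hq]; exact ⟨hne, h⟩)

end Critical

def IsTileSquare (P q : Set (ℝ × ℝ)) : Prop :=
  q = unitSq ∨ ∃ σ, Critical P σ ∧ IsQuadrantOf q σ

def IsTileOf (P q f : Set (ℝ × ℝ)) : Prop :=
  ((P ∩ q).ncard ≤ 1 ∧ f = q) ∨
    (2 ≤ (P ∩ q).ncard ∧ smallestCanSq (P ∩ q) ≠ q ∧ f = q \ smallestCanSq (P ∩ q))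

section Tiles

variable {P q f : Set (ℝ × ℝ)} {x : ℝ × ℝ}

lemma mem_QT_iff (hPU : P ⊆ unitSq) : f ∈ QT P ↔ ∃ q, IsTileSquare P q ∧ IsTileOf P q f := by
  simp only [QT, IsTileSquare, IsTileOf, Set.mem_ofPred_eq, or_and_right, exists_or,
    exists_eq_left, Set.inter_eq_left.mpr hPU, or_assoc]
  refine or_congr_right (or_congr_right ⟨?_, ?_⟩)
  · rintro ⟨σ, q, hσ, hq, h⟩
    exact ⟨q, ⟨σ, hσ, hq⟩, h⟩
  · rintro ⟨q, ⟨σ, hσ, hq⟩, h⟩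
    exact ⟨σ, q, hσ, hq, h⟩

lemma IsTileSquare.isCanSq (h : IsTileSquare P q) : IsCanSq q := by
  rcases h with rfl | ⟨σ, -, hq⟩
  exacts [⟨0, isCanSqSide_zero_unitSq⟩, hq.isCanSq]

lemma IsTileOf.subset (h : IsTileOf P q f) : f ⊆ q := by
  rcases h with ⟨-, rfl⟩ | ⟨-, -, rfl⟩
  exacts [subset_rfl, Set.sdiff_subset]

lemma IsTileOf.unique {g : Set (ℝ × ℝ)} (hf : IsTileOf P q f) (hg : IsTileOf P q g) : f = g := by
  rcases hf with ⟨h, rfl⟩ | ⟨h, -, rfl⟩ <;> rcases hg with ⟨h', rfl⟩ | ⟨h', -, rfl⟩ <;>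
    first | rfl | omega

lemma IsTileOf.notMem (h : IsTileOf P q f) (h2 : 2 ≤ (P ∩ q).ncard)
    (hx : x ∈ smallestCanSq (P ∩ q)) : x ∉ f := by
  rcases h with ⟨h1, -⟩ | ⟨-, -, rfl⟩
  · omega
  · exact fun hxf => hxf.2 hx

lemma exists_isTileOf_mem (hx : x ∈ q) (hsq : 2 ≤ (P ∩ q).ncard → x ∉ smallestCanSq (P ∩ q)) :
    ∃ f, IsTileOf P q f ∧ x ∈ f := by
  by_cases h1 : (P ∩ q).ncard ≤ 1
  · exact ⟨q, .inl ⟨h1, rfl⟩, hx⟩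
  · have h2 : 2 ≤ (P ∩ q).ncard := by omega
    exact ⟨q \ smallestCanSq (P ∩ q), .inr ⟨h2, fun h => hsq h2 (by rwa [h]), rfl⟩, hx, hsq h2⟩

lemma IsTileSquare.notMem_tile_of_ssubset {q' : Set (ℝ × ℝ)} (hP : P.Finite)
    (hq' : IsTileSquare P q') (hq : IsCanSq q) (hss : q' ⊂ q) (hf : IsTileOf P q f)
    (hx : x ∈ q') : x ∉ f := by
  rcases hq' with rfl | ⟨σ, hσ, hq'σ⟩
  · exact absurd hq.subset_unitSq hss.not_subset
  · obtain ⟨hne, hσsq⟩ := hσ.subset_smallestCanSq hq (hq'σ.subset_of_ssubset hq hss)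
    exact hf.notMem ((Set.one_lt_ncard (hP.inter_of_left q)).mpr hne) (hσsq (hq'σ.subset hx))

lemma IsTileSquare.eq_of_mem_tile {q' f' : Set (ℝ × ℝ)} (hP : P.Finite) (hq : IsTileSquare P q)
    (hq' : IsTileSquare P q') (hf : IsTileOf P q f) (hf' : IsTileOf P q' f') (hx : x ∈ f)
    (hx' : x ∈ f') : q = q' := by
  by_contra hne
  rcases hq.isCanSq.subset_or_subset hq'.isCanSq (hf.subset hx) (hf'.subset hx') with h | h
  · exact hq.notMem_tile_of_ssubset hP hq'.isCanSq (h.ssubset_of_ne hne) hf' (hf.subset hx) hx'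
  · exact hq'.notMem_tile_of_ssubset hP hq.isCanSq (h.ssubset_of_ne (Ne.symm hne)) hf
      (hf'.subset hx') hx

lemma IsTileSquare.exists_mem_QT (hP : P.Finite) (hPU : P ⊆ unitSq) (hq : IsTileSquare P q)
    (hx : x ∈ q) : ∃ f ∈ QT P, x ∈ f := by
  induction hn : (P ∩ q).ncard using Nat.strong_induction_on generalizing q with
  | _ n ih =>
  by_cases hdeep : 2 ≤ (P ∩ q).ncard ∧ x ∈ smallestCanSq (P ∩ q)
  · obtain ⟨h2, hxσ⟩ := hdeep
    have hne : (P ∩ q).Nontrivial := (Set.one_lt_ncard (hP.inter_of_left q)).mp h2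
    have hsm := isSmallestCanSq_smallestCanSq hne
      (Set.inter_subset_right.trans hq.isCanSq.subset_unitSq)
    have hσ := hsm.critical hq.isCanSq hne
    obtain ⟨q', hq', hxq'⟩ := hsm.1.exists_quadrant_mem hxσ
    have hlt := hσ.ncard_inter_lt hP hq'
    rw [hsm.inter_eq hq.isCanSq, hn] at hlt
    exact ih _ hlt (.inr ⟨_, hσ, hq'⟩) hxq' rfl
  · obtain ⟨f, hf, hxf⟩ := exists_isTileOf_mem hx fun h2 hxσ => hdeep ⟨h2, hxσ⟩
    exact ⟨f, (mem_QT_iff hPU).mpr ⟨q, hq, hf⟩, hxf⟩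

end Tiles

/-- The tiles of `QT(P)` partition the unit square: they are pairwise disjoint
and their union equals `U`. -/
theorem QT_tiles_partition (P : Set (ℝ × ℝ)) (hfin : P.Finite) (hPU : P ⊆ unitSq) :
    (QT P).Pairwise Disjoint ∧ ⋃₀ QT P = unitSq := by
  refine ⟨fun f hf g hg hfg => Set.disjoint_left.mpr fun x hxf hxg => hfg ?_, ?_⟩
  · obtain ⟨q, hq, hqf⟩ := (mem_QT_iff hPU).mp hf
    obtain ⟨q', hq', hqg⟩ := (mem_QT_iff hPU).mp hg
    obtain rfl := hq.eq_of_mem_tile hfin hq' hqf hqg hxf hxg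
    exact hqf.unique hqg
  · refine subset_antisymm (Set.sUnion_subset fun f hf => ?_) fun x hx => ?_
    · obtain ⟨q, hq, hqf⟩ := (mem_QT_iff hPU).mp hf
      exact hqf.subset.trans hq.isCanSq.subset_unitSq
    · obtain ⟨f, hf, hxf⟩ := IsTileSquare.exists_mem_QT hfin hPU (.inl rfl) hx
      exact ⟨f, hf, hxf⟩
end

section
/- (Locality of insertion.) Let P ⊆ U be finite and let p ∈ U \ P. Every tile f of QT(P) with p ∉ f is also a tile of QT(P ∪ {p}); equivalently, the only tile of QT(P) that can fail to be a tile of QT(P ∪ {p}) is the unique tile of QT(P) containing p. -/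
open scoped Classical

/-! A tile of `QT(P)` is produced by a region `r` (the unit square or a quadrant of a critical
square) from the points `S` of `P` in `r`: it is `r` if `|S| ≤ 1` and `r \ sq(S)` otherwise.
Inserting `p ∉ r` leaves `S` unchanged. Inserting `p ∈ r` outside the tile forces `p ∈ sq(S)`,
so `sq(S ∪ {p}) = sq(S)` and the tile survives; critical squares stay critical. -/

open Set

lemma smallestCanSq_eq {S σ : Set (ℝ × ℝ)} (h : IsSmallestCanSq S σ) :
    smallestCanSq S = σ := by
  have hex : ∃ σ, IsSmallestCanSq S σ := ⟨σ, h⟩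
  rw [smallestCanSq, dif_pos hex]
  obtain ⟨hτ, hSτ, hτmin⟩ := hex.choose_spec
  exact Subset.antisymm (hτmin σ h.1 h.2.1) (h.2.2 _ hτ hSτ)

lemma IsSmallestCanSq.union_singleton {S σ : Set (ℝ × ℝ)} {p : ℝ × ℝ}
    (h : IsSmallestCanSq S σ) (hp : p ∈ σ) : IsSmallestCanSq (S ∪ {p}) σ :=
  ⟨h.1, union_subset h.2.1 (singleton_subset_iff.2 hp),
    fun τ hτ hSτ => h.2.2 τ hτ (union_subset_iff.1 hSτ).1⟩

lemma smallestCanSq_union_singleton {S : Set (ℝ × ℝ)} {p : ℝ × ℝ}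
    (hp : p ∈ smallestCanSq S) : smallestCanSq (S ∪ {p}) = smallestCanSq S := by
  by_cases hex : ∃ σ, IsSmallestCanSq S σ
  · obtain ⟨σ, hσ⟩ := hex
    rw [smallestCanSq_eq hσ] at hp ⊢
    exact smallestCanSq_eq (hσ.union_singleton hp)
  · simp [smallestCanSq, dif_neg hex] at hp

lemma Critical.mono {P P' σ : Set (ℝ × ℝ)} (hPP' : P ⊆ P') (h : Critical P σ) :
    Critical P' σ := by
  obtain ⟨hσ, q₁, q₂, hq₁, hq₂, hne, hP₁, hP₂⟩ := h
  exact ⟨hσ, q₁, q₂, hq₁, hq₂, hne, hP₁.mono (inter_subset_inter_left _ hPP'),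
    hP₂.mono (inter_subset_inter_left _ hPP')⟩

lemma two_le_ncard_union_singleton {S : Set (ℝ × ℝ)} (p : ℝ × ℝ) (h : 2 ≤ S.ncard) :
    2 ≤ (S ∪ {p}).ncard := by
  have hS : S.Finite := finite_of_ncard_ne_zero (by omega)
  exact h.trans (ncard_le_ncard subset_union_left (hS.union (finite_singleton p)))

def IsRegionTile (r S f : Set (ℝ × ℝ)) : Prop :=
  (S.ncard ≤ 1 ∧ f = r) ∨ (2 ≤ S.ncard ∧ smallestCanSq S ≠ r ∧ f = r \ smallestCanSq S)

lemma mem_QT_iff_s12 {P f : Set (ℝ × ℝ)} :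
    f ∈ QT P ↔ IsRegionTile unitSq P f ∨
      ∃ σ q, Critical P σ ∧ IsQuadrantOf q σ ∧ IsRegionTile q (P ∩ q) f :=
  or_assoc.symm

lemma IsRegionTile.union_singleton {r S f : Set (ℝ × ℝ)} {p : ℝ × ℝ}
    (h : IsRegionTile r S f) (hpr : p ∈ r) (hpf : p ∉ f) : IsRegionTile r (S ∪ {p}) f := by
  rcases h with ⟨-, rfl⟩ | ⟨hS, hne, rfl⟩
  · exact absurd hpr hpf
  · have hpS : p ∈ smallestCanSq S := by_contra fun h => hpf ⟨hpr, h⟩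
    rw [IsRegionTile, smallestCanSq_union_singleton hpS]
    exact Or.inr ⟨two_le_ncard_union_singleton p hS, hne, rfl⟩

theorem QT_insert_local_general (P : Set (ℝ × ℝ))
    (p : ℝ × ℝ) (hp : p ∈ unitSq \ P) (f : Set (ℝ × ℝ))
    (hf : f ∈ QT P) (hpf : p ∉ f) :
    f ∈ QT (P ∪ {p}) := by
  rw [mem_QT_iff_s12] at hf ⊢
  rcases hf with hU | ⟨σ, q, hσ, hq, hqf⟩
  · exact Or.inl (hU.union_singleton hp.1 hpf)
  refine Or.inr ⟨σ, q, hσ.mono subset_union_left, hq, ?_⟩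
  rw [union_inter_distrib_right]
  by_cases hpq : p ∈ q
  · rw [singleton_inter_of_mem hpq]
    exact hqf.union_singleton hpq hpf
  · rwa [singleton_inter_of_notMem hpq, union_empty]

/-- Locality of insertion: every tile `f` of `QT(P)` with `p ∉ f` is also a tile
of `QT(P ∪ {p})`. -/
theorem QT_insert_local (P : Set (ℝ × ℝ)) (hfin : P.Finite) (hPU : P ⊆ unitSq)
    (p : ℝ × ℝ) (hp : p ∈ unitSq \ P) (f : Set (ℝ × ℝ))
    (hf : f ∈ QT P) (hpf : p ∉ f) :
    f ∈ QT (P ∪ {p}) :=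
  QT_insert_local_general P p hp f hf hpf
end
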